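/- Let z be an involution in S_{2n} and let v_n = (1,2)(3,4)⋯(2n−1,2n). Then there exists a sequence of simple transpositions transforming v_n into z via the operation ⋊ (with each step strictly increasing length) if and only if z has no fixed points. -/

import Mathlib

/-- The Coxeter length of a permutation of `Fin n`, i.e. its number of inversions. -/
def ell {n : ℕ} (w : Equiv.Perm (Fin n)) : ℕ :=
  (Finset.univ.filter (fun p : Fin n × Fin n => p.1 < p.2 ∧ w p.2 < w p.1)).card

/-- The number of two-cycles of an involution `y`. -/
def kap {n : ℕ} (y : Equiv.Perm (Fin n)) : ℕ :=
  (Finset.univ.filter (fun i : Fin n => i < y i)).card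

/-- `s` is a simple transposition `(i, i+1)` of `Fin n`. -/
def IsSimple {n : ℕ} (s : Equiv.Perm (Fin n)) : Prop :=
  ∃ i : ℕ, ∃ h : i + 1 < n, s = Equiv.swap ⟨i, Nat.lt_of_succ_lt h⟩ ⟨i + 1, h⟩

/-- The Richardson–Springer operation `g ⋊ s`. -/
def smult {n : ℕ} (g s : Equiv.Perm (Fin n)) : Equiv.Perm (Fin n) :=
  if s * g = g * s then g * s else s * g * s


/-- The fixed-point-free involution `v_n = (1,2)(3,4)⋯(2n-1,2n)` in `S_{2n}`. -/
def vn (n : ℕ) : Equiv.Perm (Fin (2 * n)) :=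
  ((List.finRange n).map (fun i =>
    Equiv.swap (⟨2 * i.1, by have := i.isLt; omega⟩ : Fin (2 * n))
      ⟨2 * i.1 + 1, by have := i.isLt; omega⟩)).prod

/-!
If `g` is fixed-point-free and the simple transposition `s = (a, a+1)` commutes with `g`, then
`g` swaps `a` and `a + 1`, so `g ⋊ s = g s` is shorter than `g`. Hence every length-increasing
step out of a fixed-point-free `g` is a conjugation `s g s`, which is again fixed-point-free.

Conversely, a fixed-point-free involution `z` whose every descent `z (a+1) < z a` is a two-cycle
`(a, a+1)` of `z` must be `v_n`: going up through the even letters, `z` preserves the initial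
segment already matched with `v_n`, and `z (2k) ≥ 2k + 2` would create a descent at `z (2k) - 1`
that is not a two-cycle. Any other `z` has such a descent at some `a`; then `s z s` with
`s = (a, a+1)` is a fixed-point-free involution of length `ℓ(z) - 2` not commuting with `s`,
and `(s z s) ⋊ s = z`, so induction on `ℓ(z)` builds the word.
-/

open Equiv

variable {N : ℕ} {a b : Fin N}

def inversions (w : Perm (Fin N)) : Finset (Fin N × Fin N) :=
  Finset.univ.filter fun p => p.1 < p.2 ∧ w p.2 < w p.1

lemma ell_eq_card_inversions (w : Perm (Fin N)) : ell w = (inversions w).card := rfl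

lemma mem_inversions {w : Perm (Fin N)} {p : Fin N × Fin N} :
    p ∈ inversions w ↔ p.1 < p.2 ∧ w p.2 < w p.1 := by
  simp [inversions]

lemma ell_inv (w : Perm (Fin N)) : ell w⁻¹ = ell w := by
  rw [ell_eq_card_inversions, ell_eq_card_inversions]
  refine Finset.card_nbij' (fun p => (w⁻¹ p.2, w⁻¹ p.1)) (fun p => (w p.2, w p.1))
    (fun p hp => ?_) (fun p hp => ?_) (fun p _ => by simp) (fun p _ => by simp)
  all_goals
    simp only [Finset.mem_coe, mem_inversions] at hp ⊢
    simpa using hp.symm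

lemma swap_lt_swap_of_ne (hab : (b : ℕ) = a + 1) {x y : Fin N} (hxy : x < y)
    (hne : (x, y) ≠ (a, b)) : swap a b x < swap a b y := by
  simp only [ne_eq, Prod.mk.injEq] at hne
  rw [swap_apply_def, swap_apply_def]
  split_ifs <;> simp only [Fin.ext_iff, Fin.lt_def] at * <;> omega

lemma swap_mem_erase_inversions_mul_swap (hab : (b : ℕ) = a + 1) {w : Perm (Fin N)}
    {p : Fin N × Fin N} (hp : p ∈ (inversions w).erase (a, b)) :
    (swap a b p.1, swap a b p.2) ∈ (inversions (w * swap a b)).erase (a, b) := by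
  obtain ⟨hne, hp⟩ := Finset.mem_erase.1 hp
  rw [mem_inversions] at hp
  refine Finset.mem_erase.2 ⟨fun h => ?_, mem_inversions.2 ?_⟩
  · simp only [Prod.mk.injEq, swap_apply_eq_iff, swap_apply_left, swap_apply_right] at h
    have := hp.1
    rw [h.1, h.2, Fin.lt_def] at this
    omega
  · simpa using ⟨swap_lt_swap_of_ne hab hp.1 hne, hp.2⟩

lemma card_erase_inversions_mul_swap (hab : (b : ℕ) = a + 1) (w : Perm (Fin N)) :
    ((inversions (w * swap a b)).erase (a, b)).card = ((inversions w).erase (a, b)).card := by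
  refine Finset.card_nbij' (fun p => (swap a b p.1, swap a b p.2))
    (fun p => (swap a b p.1, swap a b p.2)) (fun p hp => ?_)
    (fun p hp => swap_mem_erase_inversions_mul_swap hab hp) (fun p _ => by simp)
    (fun p _ => by simp)
  have := swap_mem_erase_inversions_mul_swap hab (w := w * swap a b) hp
  rwa [mul_swap_mul_self] at this

lemma ell_mul_swap_of_lt (hab : (b : ℕ) = a + 1) {w : Perm (Fin N)} (hw : w a < w b) :
    ell (w * swap a b) = ell w + 1 := by
  have hlt : a < b := by rw [Fin.lt_def]; omega
  have hmem : (a, b) ∈ inversions (w * swap a b) := by simpa [mem_inversions] using ⟨hlt, hw⟩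
  have hnmem : (a, b) ∉ inversions w := by simp [mem_inversions, hw.le]
  rw [ell_eq_card_inversions, ell_eq_card_inversions, ← Finset.card_erase_add_one hmem,
    card_erase_inversions_mul_swap hab, Finset.erase_eq_of_notMem hnmem]

lemma ell_mul_swap_add_one (hab : (b : ℕ) = a + 1) {w : Perm (Fin N)} (hw : w b < w a) :
    ell (w * swap a b) + 1 = ell w := by
  have := ell_mul_swap_of_lt hab (w := w * swap a b) (by simpa using hw)
  rwa [mul_assoc, swap_mul_self, mul_one, eq_comm] at this

lemma ell_swap_mul_add_one (hab : (b : ℕ) = a + 1) {w : Perm (Fin N)} (hw : w⁻¹ b < w⁻¹ a) :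
    ell (swap a b * w) + 1 = ell w := by
  rw [← ell_inv, mul_inv_rev, swap_inv, ell_mul_swap_add_one hab hw, ell_inv]

lemma ell_swap_mul_swap_add_two (hab : (b : ℕ) = a + 1) {z : Perm (Fin N)} (hz : z * z = 1)
    (hdesc : z b < z a) (hne : z a ≠ b) : ell (swap a b * z * swap a b) + 2 = ell z := by
  have hzinv : z⁻¹ = z := inv_eq_of_mul_eq_one_right hz
  have hright := ell_mul_swap_add_one hab hdesc
  have hleft : ell (swap a b * (z * swap a b)) + 1 = ell (z * swap a b) := by
    refine ell_swap_mul_add_one hab ?_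
    simpa [mul_inv_rev, hzinv] using swap_lt_swap_of_ne hab hdesc (by simp [hne])
  rw [mul_assoc]
  omega

lemma smult_of_commute {g s : Perm (Fin N)} (h : Commute s g) : smult g s = g * s := if_pos h

lemma smult_of_not_commute {g s : Perm (Fin N)} (h : ¬Commute s g) : smult g s = s * g * s :=
  if_neg h

lemma isSimple_swap (hab : (b : ℕ) = a + 1) : IsSimple (swap a b) :=
  ⟨a, by omega, by congr 1; exact Fin.ext hab⟩

lemma apply_eq_of_commute_swap (hab : a ≠ b) {z : Perm (Fin N)}
    (hc : Commute (swap a b) z) (ha : z a ≠ a) : z a = b := by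
  by_contra hzb
  have h := Perm.congr_fun hc a
  simp only [Perm.mul_apply, swap_apply_left, swap_apply_of_ne_of_ne ha hzb] at h
  exact hab (z.injective h)

lemma swap_mul_swap_apply_ne_self {z : Perm (Fin N)} (hz : ∀ i, z i ≠ i) (i : Fin N) :
    (swap a b * z * swap a b) i ≠ i := by
  intro h
  apply hz (swap a b i)
  simpa [swap_apply_eq_iff] using h

lemma swap_mul_mul_swap_mul_self_eq_one {z : Perm (Fin N)} (hz : z * z = 1) :
    swap a b * z * swap a b * (swap a b * z * swap a b) = 1 := by
  simp [mul_assoc, ← mul_assoc z z, hz]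

lemma smult_apply_ne_self {g s : Perm (Fin N)} (hg : ∀ i, g i ≠ i) (hs : IsSimple s)
    (hlen : ell g < ell (smult g s)) (i : Fin N) : smult g s i ≠ i := by
  obtain ⟨k, hk, rfl⟩ := hs
  set a : Fin N := ⟨k, by omega⟩
  set b : Fin N := ⟨k + 1, hk⟩
  have hab : (b : ℕ) = a + 1 := rfl
  by_cases hc : Commute (swap a b) g
  · exfalso
    have hga : g a = b := apply_eq_of_commute_swap (by simp [a, b, Fin.ext_iff]) hc (hg a)
    have hgb : g b = a := by
      have h := Perm.congr_fun hc b
      rwa [Perm.mul_apply, Perm.mul_apply, swap_apply_right, hga, swap_apply_eq_iff,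
        swap_apply_right] at h
    have hshorter := ell_mul_swap_add_one hab (w := g) (by rw [hga, hgb, Fin.lt_def]; omega)
    rw [smult_of_commute hc] at hlen
    omega
  · rw [smult_of_not_commute hc]
    exact swap_mul_swap_apply_ne_self hg i

def LengthIncreasing (g : Perm (Fin N)) (L : List (Perm (Fin N))) : Prop :=
  ∀ m < L.length, ell ((L.take m).foldl smult g) < ell ((L.take (m + 1)).foldl smult g)

lemma lengthIncreasing_nil (g : Perm (Fin N)) : LengthIncreasing g [] := by
  simp [LengthIncreasing]

lemma lengthIncreasing_append_singleton_iff {g s : Perm (Fin N)} {L : List (Perm (Fin N))} :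
    LengthIncreasing g (L ++ [s]) ↔
      LengthIncreasing g L ∧ ell (L.foldl smult g) < ell (smult (L.foldl smult g) s) := by
  simp only [LengthIncreasing, List.length_append, List.length_singleton, Nat.lt_succ_iff_lt_or_eq,
    or_imp, forall_and, forall_eq]
  refine and_congr (forall₂_congr fun m hm => ?_) ?_
  · rw [List.take_append_of_le_length hm.le, List.take_append_of_le_length hm]
  · have htake : (L ++ [s]).take (L.length + 1) = L ++ [s] := List.take_of_length_le (by simp)
    rw [htake, List.foldl_append, List.foldl_cons, List.foldl_nil,
      List.take_append_of_le_length le_rfl, List.take_length]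

lemma foldl_smult_apply_ne_self {g : Perm (Fin N)} (hg : ∀ i, g i ≠ i) {L : List (Perm (Fin N))}
    (hL : ∀ s ∈ L, IsSimple s) (hlen : LengthIncreasing g L) (i : Fin N) :
    L.foldl smult g i ≠ i := by
  induction L using List.reverseRecOn generalizing i with
  | nil => exact hg i
  | append_singleton L s ih =>
    rw [lengthIncreasing_append_singleton_iff] at hlen
    rw [List.foldl_append, List.foldl_cons, List.foldl_nil]
    have hL' : ∀ t ∈ L, IsSimple t := fun t ht => hL t (by simp [ht])
    exact smult_apply_ne_self (ih hL' hlen.1) (hL s (by simp)) hlen.2 i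

lemma List.prod_map_perm_apply_of_fixed {α β : Type*} {F : β → Equiv.Perm α} {l : List β}
    {x : α} (h : ∀ j ∈ l, F j x = x) : (l.map F).prod x = x := by
  have hmem : (l.map F).prod ∈ MulAction.stabilizer (Equiv.Perm α) x :=
    (MulAction.stabilizer (Equiv.Perm α) x).list_prod_mem
      (by simpa [MulAction.mem_stabilizer_iff, Equiv.Perm.smul_def] using h)
  simpa [MulAction.mem_stabilizer_iff, Equiv.Perm.smul_def] using hmem

lemma List.prod_map_perm_apply_eq {α β : Type*} {F : β → Equiv.Perm α} {l : List β}
    (hl : l.Nodup) {k : β} (hk : k ∈ l) {x : α} (hx : ∀ j ∈ l, j ≠ k → F j x = x)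
    (hkx : ∀ j ∈ l, j ≠ k → F j (F k x) = F k x) : (l.map F).prod x = F k x := by
  obtain ⟨s, t, rfl⟩ := List.append_of_mem hk
  obtain ⟨hks, -⟩ := List.nodup_cons.1 (List.nodup_middle.1 hl)
  simp only [List.mem_append, not_or] at hks
  rw [List.map_append, List.map_cons, List.prod_append, List.prod_cons, Equiv.Perm.mul_apply,
    Equiv.Perm.mul_apply, prod_map_perm_apply_of_fixed fun j hj => hx j (by simp [hj]) (by grind),
    prod_map_perm_apply_of_fixed fun j hj => hkx j (by simp [hj]) (by grind)]

lemma vn_apply {n : ℕ} (x : Fin (2 * n)) :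
    (vn n x : ℕ) =
        if (x : ℕ) % 2 = 0 then (x : ℕ) + 1 else (x : ℕ) - 1 := by
  have hpair :
      (swap (⟨2 * (x / 2), by omega⟩ : Fin (2 * n)) ⟨2 * (x / 2) + 1, by omega⟩ x : ℕ) =
        if (x : ℕ) % 2 = 0 then (x : ℕ) + 1 else (x : ℕ) - 1 := by
    rw [swap_apply_def]
    split_ifs <;> simp only [Fin.ext_iff] at * <;> omega
  have hfix (j : Fin n) (hj : j ≠ ⟨x / 2, by omega⟩) (y : Fin (2 * n))
      (hy : (y : ℕ) / 2 = x / 2) :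
      swap (⟨2 * j, by omega⟩ : Fin (2 * n)) ⟨2 * j + 1, by omega⟩ y = y := by
    simp only [ne_eq, Fin.ext_iff] at hj
    exact swap_apply_of_ne_of_ne (by simp only [ne_eq, Fin.ext_iff]; omega)
      (by simp only [ne_eq, Fin.ext_iff]; omega)
  rw [vn, List.prod_map_perm_apply_eq (List.nodup_finRange n) (List.mem_finRange _)
    (fun j _ hj => hfix j hj x rfl)
    (fun j _ hj => hfix j hj _ (by rw [hpair]; split_ifs <;> omega))]
  exact hpair

lemma vn_apply_ne_self {n : ℕ} (x : Fin (2 * n)) : vn n x ≠ x := by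
  rw [ne_eq, Fin.ext_iff, vn_apply]
  split_ifs <;> omega

lemma Equiv.Perm.involutive_of_mul_self_eq_one {α : Type*} {z : Perm α} (hz : z * z = 1) :
    Function.Involutive z :=
  fun x => by simpa using Perm.congr_fun hz x

def DescentsAreTwoCycles (z : Perm (Fin N)) : Prop :=
  ∀ a b : Fin N, (b : ℕ) = a + 1 → z b < z a → z a = b

lemma DescentsAreTwoCycles.apply_val_of_even {z : Perm (Fin N)} (hdesc : DescentsAreTwoCycles z)
    (hz : Function.Involutive z) (hfpf : ∀ i, z i ≠ i) (x : Fin N)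
    (hx : (x : ℕ) % 2 = 0) : (z x : ℕ) = x + 1 := by
  induction hm : (x : ℕ) using Nat.strong_induction_on generalizing x with
  | _ m ih =>
  have hbelow (y : Fin N) (hy : y < x) : z y < x := by
    rw [Fin.lt_def] at hy ⊢
    rcases Nat.mod_two_eq_zero_or_one y with hy2 | hy2
    · rw [ih y (by omega) y hy2 rfl]
      omega
    · have hpred := ih (y - 1) (by omega) ⟨y - 1, by omega⟩ (by simp; omega) rfl
      have hzy : z y = ⟨y - 1, by omega⟩ := by
        rw [hz.eq_iff, Fin.ext_iff, hpred]
        omega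
      rw [hzy]
      dsimp only
      omega
  have hge : x ≤ z x := by
    by_contra! hlt
    simpa [hz x] using hbelow (z x) hlt
  by_contra hne
  have hne' : (z x : ℕ) ≠ x := fun h => hfpf x (Fin.ext h)
  set a := z x with ha
  set a' : Fin N := ⟨a - 1, by omega⟩
  have hza : z a = x := hz x
  have hza' : x < z a' := by
    refine lt_of_le_of_ne ?_ fun h => ?_
    · by_contra! hlt
      have := hbelow (z a') hlt
      rw [hz a', Fin.lt_def] at this
      simp only [a'] at this
      omega
    · rw [← hza, hz.injective.eq_iff, Fin.ext_iff] at h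
      simp only [a'] at h
      omega
  have hpair : z a' = a := hdesc a' a (by simp only [a']; omega) (by rwa [hza])
  rw [hz.eq_iff, hza, Fin.ext_iff] at hpair
  simp only [a'] at hpair
  omega

lemma DescentsAreTwoCycles.eq_vn {n : ℕ} {z : Perm (Fin (2 * n))}
    (hdesc : DescentsAreTwoCycles z) (hz : Function.Involutive z) (hfpf : ∀ i, z i ≠ i) :
    z = vn n := by
  ext x
  rw [vn_apply]
  split_ifs with hx
  · exact hdesc.apply_val_of_even hz hfpf x hx
  · have hpred := hdesc.apply_val_of_even hz hfpf ⟨x - 1, by omega⟩ (by simp; omega)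
    have hzx : z x = ⟨x - 1, by omega⟩ := by
      rw [hz.eq_iff, Fin.ext_iff, hpred]
      dsimp only
      omega
    rw [hzx]

lemma smult_swap_mul_swap {z : Perm (Fin N)} (hc : ¬Commute (swap a b) z) :
    smult (swap a b * z * swap a b) (swap a b) = z := by
  have hc' : ¬Commute (swap a b) (swap a b * z * swap a b) := fun h =>
    hc (by simpa [Commute, SemiconjBy, mul_assoc] using h.symm)
  rw [smult_of_not_commute hc']
  simp only [mul_assoc, swap_mul_self_mul, swap_mul_self, mul_one]

lemma exists_involution_word {n : ℕ} (z : Perm (Fin (2 * n))) (hz : z * z = 1)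
    (hfpf : ∀ i, z i ≠ i) :
    ∃ L : List (Perm (Fin (2 * n))), (∀ s ∈ L, IsSimple s) ∧ LengthIncreasing (vn n) L ∧
      L.foldl smult (vn n) = z := by
  induction hlen : ell z using Nat.strong_induction_on generalizing z with
  | _ e ih =>
  by_cases hdesc : DescentsAreTwoCycles z
  · exact ⟨[], by simp, lengthIncreasing_nil _,
      (hdesc.eq_vn (Perm.involutive_of_mul_self_eq_one hz) hfpf).symm⟩
  simp only [DescentsAreTwoCycles, not_forall, exists_prop] at hdesc
  obtain ⟨a, b, hab, hlt, hne⟩ := hdesc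
  have hshorter := ell_swap_mul_swap_add_two hab hz hlt hne
  have hc : ¬Commute (swap a b) z := fun hc =>
    hne (apply_eq_of_commute_swap (by simp [Fin.ext_iff, hab]) hc (hfpf a))
  obtain ⟨L, hLs, hLlen, hLz⟩ := ih _ (by omega) (swap a b * z * swap a b)
    (swap_mul_mul_swap_mul_self_eq_one hz) (swap_mul_swap_apply_ne_self hfpf) rfl
  refine ⟨L ++ [swap a b], ?_, ?_, ?_⟩
  · simpa [or_imp, forall_and] using ⟨hLs, isSimple_swap hab⟩
  · rw [lengthIncreasing_append_singleton_iff, hLz, smult_swap_mul_swap hc]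
    exact ⟨hLlen, by omega⟩
  · rw [List.foldl_append, hLz, List.foldl_cons, List.foldl_nil, smult_swap_mul_swap hc]

/-- For an involution `z ∈ S_{2n}`, there is a sequence of simple transpositions
transforming `v_n` into `z` via `⋊`, with each step strictly increasing the length,
if and only if `z` has no fixed points. -/
theorem stmt4 {n : ℕ} (z : Equiv.Perm (Fin (2 * n))) (hz : z * z = 1) :
    (∃ L : List (Equiv.Perm (Fin (2 * n))),
      (∀ s ∈ L, IsSimple s) ∧
      (∀ m < L.length,
        ell ((L.take m).foldl smult (vn n)) < ell ((L.take (m + 1)).foldl smult (vn n))) ∧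
      L.foldl smult (vn n) = z) ↔ (∀ i, z i ≠ i) := by
  constructor
  · rintro ⟨L, hLs, hLlen, rfl⟩
    exact foldl_smult_apply_ne_self vn_apply_ne_self hLs hLlen
  · exact exists_involution_word z hz
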